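/- Let q ≥ 2 be odd, let (P, L) be a finite projective plane of order q, let B be a projective bundle, and let ℓ ∈ L be a line. Then every point Q ∈ P with Q ∉ ℓ lies on exactly 0 or exactly 2 ovals of B that are tangent to ℓ. -/

import Mathlib

/-!
The ovals of the bundle through a point `x` cover every other point exactly once. Through a
point `Q ∉ ℓ` they therefore meet `ℓ` in `q + 1` points in total, each in at most two, so the
number `t Q` of tangents through `Q` is even. Through `R ∈ ℓ` the `q + 1` ovals meet `ℓ` in
`2q + 1` points in total, so exactly one of them is tangent, and there are `q + 1` tangents. Any
two tangents meet in exactly one point, which lies off `ℓ`; double counting then gives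
`∑ t Q = ∑ t Q (t Q - 1) = (q + 1) q` over `Q ∉ ℓ`. As `t Q` is even, `t Q ≤ t Q (t Q - 1)`
termwise, so equality holds everywhere and `t Q ∈ {0, 2}`.
-/

/-- A finite projective plane of order `q`, given by its set of lines (each line a
finite set of points of the ambient point type `P`): any two distinct points lie on
exactly one common line, any two distinct lines meet in exactly one point, there are
four points no three of which are collinear, and every line has `q + 1` points. -/
structure IsProjectivePlane (q : ℕ) {P : Type} [DecidableEq P] (L : Finset (Finset P)) : Prop where
  exists_unique_line : ∀ p₁ p₂ : P, p₁ ≠ p₂ → ∃! ℓ, ℓ ∈ L ∧ p₁ ∈ ℓ ∧ p₂ ∈ ℓ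
  exists_unique_point : ∀ ℓ₁ ∈ L, ∀ ℓ₂ ∈ L, ℓ₁ ≠ ℓ₂ → ∃! p, p ∈ ℓ₁ ∧ p ∈ ℓ₂
  nondeg : ∃ a b c d : P, a ≠ b ∧ a ≠ c ∧ a ≠ d ∧ b ≠ c ∧ b ≠ d ∧ c ≠ d ∧
      ∀ ℓ ∈ L, (ℓ ∩ ({a, b, c, d} : Finset P)).card ≤ 2
  card_line : ∀ ℓ ∈ L, ℓ.card = q + 1

/-- An oval: a set of `q + 1` points such that every line contains at most two of them. -/
def IsOval (q : ℕ) {P : Type} [DecidableEq P] (L : Finset (Finset P)) (O : Finset P) : Prop :=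
  O.card = q + 1 ∧ ∀ ℓ ∈ L, (ℓ ∩ O).card ≤ 2

/-- A projective bundle: a set of `q² + q + 1` ovals, any two of which meet in
exactly one point. -/
def IsProjectiveBundle (q : ℕ) {P : Type} [DecidableEq P] (L : Finset (Finset P))
    (B : Finset (Finset P)) : Prop :=
  B.card = q ^ 2 + q + 1 ∧ (∀ o ∈ B, IsOval q L o) ∧
    ∀ o₁ ∈ B, ∀ o₂ ∈ B, o₁ ≠ o₂ → (o₁ ∩ o₂).card = 1

open Finset

theorem sum_card_filter_mem_eq_sum_card_inter {α : Type*} [DecidableEq α] (s : Finset α)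
    (B : Finset (Finset α)) : ∑ a ∈ s, #{b ∈ B | a ∈ b} = ∑ t ∈ B, #(s ∩ t) := by
  simpa only [bipartiteAbove, bipartiteBelow, filter_mem_eq_inter] using
    sum_card_bipartiteAbove_eq_sum_card_bipartiteBelow (s := s) (t := B) (r := (· ∈ ·))

theorem sum_card_filter_mem_mul_pred {α : Type*} [Fintype α] [DecidableEq α]
    {T : Finset (Finset α)} (hT : ∀ o₁ ∈ T, ∀ o₂ ∈ T, o₁ ≠ o₂ → #(o₁ ∩ o₂) = 1) :
    ∑ x, #{o ∈ T | x ∈ o} * (#{o ∈ T | x ∈ o} - 1) = #T * (#T - 1) := by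
  have hpairs : ∀ x, #{o ∈ T | x ∈ o} * (#{o ∈ T | x ∈ o} - 1)
      = #{p ∈ T.offDiag | x ∈ p.1 ∧ x ∈ p.2} := by
    intro x
    rw [Nat.mul_sub_one, ← offDiag_card]
    congr 1
    ext p
    simp only [mem_offDiag, mem_filter]
    tauto
  have hmeet : ∀ p ∈ T.offDiag, #{x ∈ univ | x ∈ p.1 ∧ x ∈ p.2} = 1 := by
    intro p hp
    obtain ⟨h₁, h₂, hne⟩ := mem_offDiag.mp hp
    rw [← hT _ h₁ _ h₂ hne]
    congr 1
    ext x
    simp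
  calc ∑ x, #{o ∈ T | x ∈ o} * (#{o ∈ T | x ∈ o} - 1)
      = ∑ x, #{p ∈ T.offDiag | x ∈ p.1 ∧ x ∈ p.2} := sum_congr rfl fun x _ => hpairs x
    _ = ∑ p ∈ T.offDiag, #{x ∈ univ | x ∈ p.1 ∧ x ∈ p.2} :=
      sum_card_bipartiteAbove_eq_sum_card_bipartiteBelow _
    _ = #T * (#T - 1) := by rw [sum_congr rfl hmeet, ← card_eq_sum_ones, offDiag_card,
      Nat.mul_sub_one]

theorem sum_add_card_filter_eq_one_add_two_mul_card_filter_eq_zero {ι : Type*} {s : Finset ι}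
    {f : ι → ℕ} (hf : ∀ i ∈ s, f i ≤ 2) :
    ∑ i ∈ s, f i + #{i ∈ s | f i = 1} + 2 * #{i ∈ s | f i = 0} = 2 * #s := by
  rw [card_filter, card_filter, mul_sum, ← sum_add_distrib, ← sum_add_distrib, card_eq_sum_ones,
    mul_sum]
  refine sum_congr rfl fun i hi => ?_
  have := hf i hi
  interval_cases f i <;> rfl

theorem Nat.le_mul_pred_of_even {n : ℕ} (hn : Even n) : n ≤ n * (n - 1) := by
  rcases n with _ | _ | n
  · rfl
  · exact absurd hn Nat.not_even_one
  · rw [Nat.add_sub_cancel]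
    nlinarith

theorem Nat.eq_zero_or_eq_two_of_eq_mul_pred {n : ℕ} (hn : n = n * (n - 1)) : n = 0 ∨ n = 2 := by
  rcases n with _ | _ | _ | n
  · left; rfl
  · simp at hn
  · right; rfl
  · rw [Nat.add_sub_cancel] at hn
    nlinarith

namespace IsProjectivePlane

variable {q : ℕ} {P : Type} [DecidableEq P] {L : Finset (Finset P)}

theorem card_filter_mem_mem (hL : IsProjectivePlane q L) {x y : P} (hxy : x ≠ y) :
    #{n ∈ L | x ∈ n ∧ y ∈ n} = 1 := by
  simpa only [card_eq_one_iff_existsUnique, mem_filter, and_assoc] using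
    hL.exists_unique_line x y hxy

theorem exists_notMem_line (hL : IsProjectivePlane q L) : ∃ m ∈ L, ∃ c, c ∉ m := by
  obtain ⟨a, b, c, d, hab, hac, -, hbc, -, -, hgen⟩ := hL.nondeg
  obtain ⟨m, ⟨hm, ham, hbm⟩, -⟩ := hL.exists_unique_line a b hab
  refine ⟨m, hm, c, fun hcm => ?_⟩
  have hsub : ({a, b, c} : Finset P) ⊆ m ∩ {a, b, c, d} := by
    intro z hz
    simp only [mem_insert, mem_singleton] at hz
    rcases hz with rfl | rfl | rfl <;> simp [*]
  have := card_le_card hsub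
  rw [card_insert_of_notMem (by simp [hab, hac]), card_insert_of_notMem (by simp [hbc]),
    card_singleton] at this
  linarith [hgen m hm]

theorem card_points [Fintype P] (hL : IsProjectivePlane q L) : Fintype.card P = q ^ 2 + q + 1 := by
  obtain ⟨m, hm, c, hcm⟩ := hL.exists_notMem_line
  have hunique : ∀ y ∈ univ.erase c, #{n ∈ {n ∈ L | c ∈ n} | y ∈ n} = 1 := fun y hy => by
    rw [filter_filter]; exact hL.card_filter_mem_mem (ne_of_mem_erase hy).symm
  have hpencil : #{n ∈ L | c ∈ n} = q + 1 := by
    have hmeet : ∀ n ∈ {n ∈ L | c ∈ n}, #(m ∩ n) = 1 := fun n hn => by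
      obtain ⟨hn, hcn⟩ := mem_filter.mp hn
      simpa only [card_eq_one_iff_existsUnique, mem_inter, and_comm] using
        hL.exists_unique_point n hn m hm (by rintro rfl; exact hcm hcn)
    have := sum_card_inter (n := 1) fun y hy =>
      hunique y (mem_erase.mpr ⟨by rintro rfl; exact hcm hy, mem_univ y⟩)
    rwa [sum_congr rfl hmeet, ← card_eq_sum_ones, mul_one, hL.card_line m hm] at this
  have hcover := sum_card_inter (n := 1) hunique
  have hlines : ∀ n ∈ {n ∈ L | c ∈ n}, #(univ.erase c ∩ n) = q := fun n hn => by
    obtain ⟨hn, hcn⟩ := mem_filter.mp hn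
    rw [erase_inter, univ_inter, card_erase_of_mem hcn, hL.card_line n hn, Nat.add_sub_cancel]
  rw [sum_congr rfl hlines, sum_const, hpencil, smul_eq_mul, mul_one,
    card_erase_of_mem (mem_univ c), card_univ] at hcover
  have := Fintype.card_pos_iff.mpr ⟨c⟩
  rw [sq, ← add_one_mul]
  omega

end IsProjectivePlane

namespace IsProjectiveBundle

variable {q : ℕ} {P : Type} [DecidableEq P] {L B : Finset (Finset P)}

theorem card_inter_le_two (hB : IsProjectiveBundle q L B) {o ℓ : Finset P} (ho : o ∈ B)
    (hℓ : ℓ ∈ L) : #(o ∩ ℓ) ≤ 2 :=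
  inter_comm o ℓ ▸ (hB.2.1 o ho).2 ℓ hℓ

theorem card_filter_mem_mem_le_one (hB : IsProjectiveBundle q L B) {x y : P} (hxy : x ≠ y) :
    #{o ∈ B | x ∈ o ∧ y ∈ o} ≤ 1 := by
  refine card_le_one.mpr fun o₁ h₁ o₂ h₂ => ?_
  obtain ⟨h₁, hx₁, hy₁⟩ := mem_filter.mp h₁
  obtain ⟨h₂, hx₂, hy₂⟩ := mem_filter.mp h₂
  by_contra hne
  exact hxy (card_le_one.mp (hB.2.2 o₁ h₁ o₂ h₂ hne).le x (mem_inter.mpr ⟨hx₁, hx₂⟩) y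
    (mem_inter.mpr ⟨hy₁, hy₂⟩))

variable {ℓ : Finset P}

theorem filter_mem_and_tangent_eq (Q : P) :
    {o ∈ B | Q ∈ o ∧ #(o ∩ ℓ) = 1} = {o ∈ {o ∈ B | #(o ∩ ℓ) = 1} | Q ∈ o} := by
  rw [filter_filter]
  simp only [and_comm]

variable [Fintype P]

theorem sum_card_univ_erase_inter (hB : IsProjectiveBundle q L B) (x : P) :
    ∑ o ∈ {o ∈ B | x ∈ o}, #(univ.erase x ∩ o) = #{o ∈ B | x ∈ o} * q := by
  refine sum_const_nat fun o ho => ?_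
  obtain ⟨ho, hxo⟩ := mem_filter.mp ho
  rw [erase_inter, univ_inter, card_erase_of_mem hxo, (hB.2.1 o ho).1, Nat.add_sub_cancel]

theorem card_filter_mem (hB : IsProjectiveBundle q L B) (hP : Fintype.card P = q ^ 2 + q + 1)
    (hq : 0 < q) (x : P) : #{o ∈ B | x ∈ o} = q + 1 := by
  -- the ovals through `y` are disjoint away from `y`, and the average over `y` is `q + 1`
  have hle : ∀ y, #{o ∈ B | y ∈ o} ≤ q + 1 := by
    intro y
    have h := sum_card_inter_le (s := univ.erase y) (n := 1) fun z hz => by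
      rw [filter_filter]; exact hB.card_filter_mem_mem_le_one (ne_of_mem_erase hz).symm
    rw [hB.sum_card_univ_erase_inter, card_erase_of_mem (mem_univ y), card_univ, hP, mul_one,
      Nat.add_sub_cancel, sq, ← add_one_mul] at h
    exact Nat.le_of_mul_le_mul_right h hq
  have hsum : ∑ y, #{o ∈ B | y ∈ o} = ∑ _y : P, (q + 1) := by
    rw [sum_card_filter_mem_eq_sum_card_inter, sum_const, card_univ, hP, smul_eq_mul, ← hB.1]
    simp_rw [univ_inter]
    exact sum_const_nat fun o ho => (hB.2.1 o ho).1
  exact (sum_eq_sum_iff_of_le fun y _ => hle y).mp hsum x (mem_univ x)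

theorem card_filter_mem_mem (hB : IsProjectiveBundle q L B)
    (hP : Fintype.card P = q ^ 2 + q + 1) (hq : 0 < q) {x y : P} (hxy : x ≠ y) :
    #{o ∈ B | x ∈ o ∧ y ∈ o} = 1 := by
  have hle : ∀ z ∈ univ.erase x, #{o ∈ {o ∈ B | x ∈ o} | z ∈ o} ≤ 1 := fun z hz => by
    rw [filter_filter]; exact hB.card_filter_mem_mem_le_one (ne_of_mem_erase hz).symm
  have hsum : ∑ z ∈ univ.erase x, #{o ∈ {o ∈ B | x ∈ o} | z ∈ o} = ∑ z ∈ univ.erase x, 1 := by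
    rw [sum_card_filter_mem_eq_sum_card_inter, hB.sum_card_univ_erase_inter,
      hB.card_filter_mem hP hq, ← card_eq_sum_ones, card_erase_of_mem (mem_univ x), card_univ, hP]
    ring_nf
    omega
  have := (sum_eq_sum_iff_of_le hle).mp hsum y (mem_erase.mpr ⟨hxy.symm, mem_univ y⟩)
  rwa [filter_filter] at this

theorem sum_card_inter_filter_mem_of_notMem (hB : IsProjectiveBundle q L B)
    (hP : Fintype.card P = q ^ 2 + q + 1) (hq : 0 < q) {x : P} {s : Finset P} (hx : x ∉ s) :
    ∑ o ∈ {o ∈ B | x ∈ o}, #(s ∩ o) = #s := by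
  rw [sum_card_inter (n := 1) fun y hy => ?_, mul_one]
  rw [filter_filter]
  exact hB.card_filter_mem_mem hP hq (by rintro rfl; exact hx hy)

theorem sum_card_inter_filter_mem_of_mem (hB : IsProjectiveBundle q L B)
    (hP : Fintype.card P = q ^ 2 + q + 1) (hq : 0 < q) {x : P} {s : Finset P} (hx : x ∈ s) :
    ∑ o ∈ {o ∈ B | x ∈ o}, #(s ∩ o) = #s + q := by
  have hsplit : ∀ o ∈ {o ∈ B | x ∈ o}, #(s ∩ o) = #(s.erase x ∩ o) + 1 := fun o ho => by
    rw [erase_inter, card_erase_add_one (mem_inter.mpr ⟨hx, (mem_filter.mp ho).2⟩)]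
  rw [sum_congr rfl hsplit, sum_add_distrib,
    hB.sum_card_inter_filter_mem_of_notMem hP hq (notMem_erase x s), card_erase_of_mem hx,
    ← card_eq_sum_ones, hB.card_filter_mem hP hq]
  have := card_pos.mpr ⟨x, hx⟩
  omega

theorem card_filter_tangent_at (hB : IsProjectiveBundle q L B) (hL : IsProjectivePlane q L)
    (hq : 0 < q) (hℓ : ℓ ∈ L) {R : P} (hR : R ∈ ℓ) :
    #{o ∈ B | R ∈ o ∧ #(o ∩ ℓ) = 1} = 1 := by
  have hP := hL.card_points
  have hsum := hB.sum_card_inter_filter_mem_of_mem hP hq hR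
  simp_rw [inter_comm ℓ] at hsum
  have hsecant : #{o ∈ {o ∈ B | R ∈ o} | #(o ∩ ℓ) = 0} = 0 := by
    refine card_eq_zero.mpr (filter_eq_empty_iff.mpr fun o ho h0 => ?_)
    exact (card_pos.mpr ⟨R, mem_inter.mpr ⟨(mem_filter.mp ho).2, hR⟩⟩).ne' h0
  have hcount := sum_add_card_filter_eq_one_add_two_mul_card_filter_eq_zero
    (s := {o ∈ B | R ∈ o}) (f := fun o => #(o ∩ ℓ))
    fun o ho => hB.card_inter_le_two (mem_filter.mp ho).1 hℓ
  rw [hsum, hsecant, hB.card_filter_mem hP hq, hL.card_line ℓ hℓ, filter_filter] at hcount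
  omega

theorem card_filter_tangent (hB : IsProjectiveBundle q L B) (hL : IsProjectivePlane q L)
    (hq : 0 < q) (hℓ : ℓ ∈ L) : #{o ∈ B | #(o ∩ ℓ) = 1} = q + 1 := by
  have h := sum_card_inter (s := ℓ) (B := {o ∈ B | #(o ∩ ℓ) = 1}) (n := 1) fun R hR => by
    rw [← filter_mem_and_tangent_eq]
    exact hB.card_filter_tangent_at hL hq hℓ hR
  have htangent : ∀ o ∈ {o ∈ B | #(o ∩ ℓ) = 1}, #(ℓ ∩ o) = 1 := fun o ho =>
    inter_comm o ℓ ▸ (mem_filter.mp ho).2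
  rwa [sum_congr rfl htangent, ← card_eq_sum_ones, mul_one, hL.card_line ℓ hℓ] at h

theorem even_card_filter_tangent (hB : IsProjectiveBundle q L B) (hL : IsProjectivePlane q L)
    (hodd : Odd q) (hℓ : ℓ ∈ L) {Q : P} (hQ : Q ∉ ℓ) :
    Even #{o ∈ B | Q ∈ o ∧ #(o ∩ ℓ) = 1} := by
  have hsum := hB.sum_card_inter_filter_mem_of_notMem hL.card_points hodd.pos hQ
  simp_rw [inter_comm ℓ] at hsum
  have hcount := sum_add_card_filter_eq_one_add_two_mul_card_filter_eq_zero
    (s := {o ∈ B | Q ∈ o}) (f := fun o => #(o ∩ ℓ))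
    fun o ho => hB.card_inter_le_two (mem_filter.mp ho).1 hℓ
  rw [hsum, hL.card_line ℓ hℓ, filter_filter] at hcount
  obtain ⟨k, hk⟩ := hodd.add_one
  exact ⟨#{o ∈ B | Q ∈ o} - #{o ∈ {o ∈ B | Q ∈ o} | #(o ∩ ℓ) = 0} - k, by omega⟩

theorem sum_card_filter_tangent_compl (hB : IsProjectiveBundle q L B) (hL : IsProjectivePlane q L)
    (hq : 0 < q) (hℓ : ℓ ∈ L) :
    ∑ Q ∈ ℓᶜ, #{o ∈ B | Q ∈ o ∧ #(o ∩ ℓ) = 1} = (q + 1) * q := by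
  simp_rw [filter_mem_and_tangent_eq]
  rw [sum_card_filter_mem_eq_sum_card_inter, ← hB.card_filter_tangent hL hq hℓ]
  refine sum_const_nat fun o ho => ?_
  obtain ⟨ho, htangent⟩ := mem_filter.mp ho
  have := card_sdiff_add_card_inter o ℓ
  rw [inter_comm, ← sdiff_eq_inter_compl]
  rw [htangent, (hB.2.1 o ho).1] at this
  omega

theorem sum_card_filter_tangent_mul_pred_compl (hB : IsProjectiveBundle q L B)
    (hL : IsProjectivePlane q L) (hq : 0 < q) (hℓ : ℓ ∈ L) :
    ∑ Q ∈ ℓᶜ, #{o ∈ B | Q ∈ o ∧ #(o ∩ ℓ) = 1} * (#{o ∈ B | Q ∈ o ∧ #(o ∩ ℓ) = 1} - 1)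
      = (q + 1) * q := by
  have h := sum_card_filter_mem_mul_pred (T := {o ∈ B | #(o ∩ ℓ) = 1})
    fun o₁ h₁ o₂ h₂ => hB.2.2 o₁ (mem_filter.mp h₁).1 o₂ (mem_filter.mp h₂).1
  simp_rw [← filter_mem_and_tangent_eq] at h
  have hline : ∑ R ∈ ℓ, #{o ∈ B | R ∈ o ∧ #(o ∩ ℓ) = 1} *
      (#{o ∈ B | R ∈ o ∧ #(o ∩ ℓ) = 1} - 1) = 0 :=
    sum_eq_zero fun R hR => by rw [hB.card_filter_tangent_at hL hq hℓ hR, Nat.sub_self, mul_zero]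
  rwa [← sum_compl_add_sum ℓ, hline, add_zero, hB.card_filter_tangent hL hq hℓ] at h

end IsProjectiveBundle

theorem statement_9_general (q : ℕ) (hodd : Odd q) (P : Type) [Fintype P] [DecidableEq P]
    (L : Finset (Finset P)) (hL : IsProjectivePlane q L)
    (B : Finset (Finset P)) (hB : IsProjectiveBundle q L B)
    (ℓ : Finset P) (hℓ : ℓ ∈ L) (Q : P) (hQ : Q ∉ ℓ) :
    (B.filter fun o => Q ∈ o ∧ (o ∩ ℓ).card = 1).card = 0 ∨
    (B.filter fun o => Q ∈ o ∧ (o ∩ ℓ).card = 1).card = 2 := by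
  have hle : ∀ R ∈ ℓᶜ, #{o ∈ B | R ∈ o ∧ #(o ∩ ℓ) = 1}
      ≤ #{o ∈ B | R ∈ o ∧ #(o ∩ ℓ) = 1} * (#{o ∈ B | R ∈ o ∧ #(o ∩ ℓ) = 1} - 1) :=
    fun R hR => Nat.le_mul_pred_of_even (hB.even_card_filter_tangent hL hodd hℓ (mem_compl.mp hR))
  have hsum := (hB.sum_card_filter_tangent_compl hL hodd.pos hℓ).trans
    (hB.sum_card_filter_tangent_mul_pred_compl hL hodd.pos hℓ).symm
  exact Nat.eq_zero_or_eq_two_of_eq_mul_pred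
    ((sum_eq_sum_iff_of_le hle).mp hsum Q (mem_compl.mpr hQ))

/-- For `q ≥ 2` odd, a projective bundle `B` and a line `ℓ`, every point not on
`ℓ` lies on exactly 0 or exactly 2 ovals of `B` tangent to `ℓ`. -/
theorem statement_9 (q : ℕ) (hq : 2 ≤ q) (hodd : Odd q) (P : Type) [Fintype P] [DecidableEq P]
    (L : Finset (Finset P)) (hL : IsProjectivePlane q L)
    (B : Finset (Finset P)) (hB : IsProjectiveBundle q L B)
    (ℓ : Finset P) (hℓ : ℓ ∈ L) (Q : P) (hQ : Q ∉ ℓ) :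
    (B.filter fun o => Q ∈ o ∧ (o ∩ ℓ).card = 1).card = 0 ∨
    (B.filter fun o => Q ∈ o ∧ (o ∩ ℓ).card = 1).card = 2 :=
  statement_9_general q hodd P L hL B hB ℓ hℓ Q hQ
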